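/- Let q be an image-transformation from a locally compact Hausdorff space X to a Hausdorff space Y, and define q(a)(y) := (q*δ_y)(a) for a ∈ C_b(X), where q*δ_y = δ_y ∘ q is the pulled-back simple quasi-measure and the value is its quasi-integral at a. Then q(a) ∈ C_b(Y), q ∘ a⁻¹ = (q(a))⁻¹ as maps on images of ℝ, and q(φ ∘ a) = φ ∘ q(a) for every continuous φ : ℝ → ℝ, so a ↦ q(a) restricts to an algebra homomorphism A(a) → A(q(a)) for each a. -/

import Mathlib

open Set MeasureTheory BoundedContinuousFunction Filter Topology

/-- An *image* is a set that is either open or closed. -/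
def IsImage {X : Type*} [TopologicalSpace X] (A : Set X) : Prop := IsOpen A ∨ IsClosed A

/-- A (normalized, additive, compact-regular) quasi-measure on the images of `X`. -/
structure IsQuasiMeasure {X : Type*} [TopologicalSpace X] (μ : Set X → ℝ) : Prop where
  nonneg : ∀ A : Set X, IsImage A → 0 ≤ μ A
  normalized : μ Set.univ = 1
  additive : ∀ A B : Set X, IsImage A → IsImage B → IsImage (A ∪ B) → Disjoint A B →
    μ (A ∪ B) = μ A + μ B
  regular : ∀ U : Set X, IsOpen U →
    IsLUB {r : ℝ | ∃ K : Set X, IsCompact K ∧ K ⊆ U ∧ μ K = r} (μ U)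

/-- A quasi-measure is simple if it only takes the values 0 and 1. -/
def IsSimpleQM {X : Type*} [TopologicalSpace X] (μ : Set X → ℝ) : Prop :=
  ∀ A : Set X, IsImage A → μ A = 0 ∨ μ A = 1

-- The quasi-integral of `a` with respect to `μ`: `∫ t dμ_a(t)` where `μ_a`
-- is the Borel probability measure extending `μ ∘ a⁻¹` (if it exists).
open Classical in
noncomputable def qint {X : Type*} [TopologicalSpace X] (μ : Set X → ℝ) (a : X →ᵇ ℝ) : ℝ :=
  if h : ∃ ν : MeasureTheory.Measure ℝ, MeasureTheory.IsProbabilityMeasure ν ∧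
      ∀ A : Set ℝ, IsImage A → ν A = ENNReal.ofReal (μ (a ⁻¹' A))
  then ∫ t, t ∂ h.choose else 0

/-- An image-transformation from `X` to `Y`. -/
structure IsImageTransformation {X Y : Type*} [TopologicalSpace X] [TopologicalSpace Y]
    (q : Set X → Set Y) : Prop where
  image : ∀ A : Set X, IsImage A → IsImage (q A)
  top : q Set.univ = Set.univ
  openMap : ∀ U : Set X, IsOpen U → IsOpen (q U)
  additive : ∀ A B : Set X, IsImage A → IsImage B → IsImage (A ∪ B) → Disjoint A B →
    q (A ∪ B) = q A ∪ q B ∧ Disjoint (q A) (q B)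
  regular : ∀ U : Set X, IsOpen U → ∀ K : Set Y, IsCompact K → K ⊆ q U →
    ∃ L : Set X, IsCompact L ∧ L ⊆ U ∧ K ⊆ q L

-- The function `q(a) : Y → ℝ`, `q(a)(y) = (q*δ_y)(a)`, the quasi-integral of `a` with
-- respect to the pulled-back simple quasi-measure `δ_y ∘ q`.
open Classical in
noncomputable def qmap {X Y : Type*} [TopologicalSpace X] [TopologicalSpace Y]
    (q : Set X → Set Y) (a : X →ᵇ ℝ) (y : Y) : ℝ :=
  qint (fun A : Set X => if y ∈ q A then (1 : ℝ) else 0) a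

/-!
For fixed `a` and `y`, `A ↦ q (a ⁻¹' A)` is again an image-transformation, now from `ℝ`, so
`A ↦ [y ∈ q (a ⁻¹' A)]` is a simple quasi-measure on `ℝ`. On `ℝ` every such quasi-measure is a
point mass `δ_r`: regularity puts `y` into `q L` for a compact `L`, which makes
`r := sup {t | y ∈ q (a ⁻¹' [t, ∞))}` finite, and additivity then puts `y` into the image of every
`a ⁻¹' (s, t)` with `s < r < t`. Hence `qmap q a y = r` and `y ∈ q (a ⁻¹' A) ↔ qmap q a y ∈ A`
for every image `A`; continuity (`q` maps open sets to open sets), the bound `‖a‖` and the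
composition rule `(φ ∘ a) ⁻¹' A = a ⁻¹' (φ ⁻¹' A)` all follow from this identity.
-/

lemma IsOpen.isImage {X : Type*} [TopologicalSpace X] {A : Set X} (hA : IsOpen A) : IsImage A :=
  Or.inl hA

lemma IsClosed.isImage {X : Type*} [TopologicalSpace X] {A : Set X} (hA : IsClosed A) :
    IsImage A :=
  Or.inr hA

lemma IsImage.compl {X : Type*} [TopologicalSpace X] {A : Set X} (hA : IsImage A) :
    IsImage Aᶜ :=
  hA.elim (fun h => h.isClosed_compl.isImage) (fun h => h.isOpen_compl.isImage)

lemma IsImage.preimage {X Z : Type*} [TopologicalSpace X] [TopologicalSpace Z] {f : X → Z}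
    (hf : Continuous f) {A : Set Z} (hA : IsImage A) : IsImage (f ⁻¹' A) :=
  hA.imp (fun h => h.preimage hf) (fun h => h.preimage hf)

lemma IsImage.measurableSet {X : Type*} [TopologicalSpace X] [MeasurableSpace X]
    [OpensMeasurableSpace X] {A : Set X} (hA : IsImage A) : MeasurableSet A :=
  hA.elim IsOpen.measurableSet IsClosed.measurableSet

namespace IsImageTransformation

section

variable {X Y : Type*} [TopologicalSpace X] [TopologicalSpace Y] {q : Set X → Set Y}

lemma map_empty (hq : IsImageTransformation q) : q ∅ = ∅ := by
  have h := hq.additive ∅ ∅ isOpen_empty.isImage isOpen_empty.isImage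
    (by simpa using isOpen_empty.isImage) (by simp)
  simpa using h.2

lemma map_compl (hq : IsImageTransformation q) {A : Set X} (hA : IsImage A) :
    q Aᶜ = (q A)ᶜ := by
  have h := hq.additive A Aᶜ hA hA.compl (by simpa using isOpen_univ.isImage)
    disjoint_compl_right
  rw [union_compl_self, hq.top] at h
  exact (IsCompl.of_eq h.2.eq_bot h.1.symm).compl_eq.symm

lemma map_mono_of_isImage_diff (hq : IsImageTransformation q) {A B : Set X} (hA : IsImage A)
    (hB : IsImage B) (hBA : IsImage (B \ A)) (hAB : A ⊆ B) : q A ⊆ q B := by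
  have h := hq.additive A (B \ A) hA hBA (by rwa [union_sdiff_cancel hAB]) disjoint_sdiff_right
  rw [union_sdiff_cancel hAB] at h
  exact h.1 ▸ subset_union_left

variable [T2Space X]

-- Regularity reduces the open case to a compact, hence closed, inner set `L`.
lemma map_mono_of_isOpen (hq : IsImageTransformation q) {U V : Set X} (hU : IsOpen U)
    (hV : IsOpen V) (hUV : U ⊆ V) : q U ⊆ q V := by
  intro y hy
  obtain ⟨L, hL, hLU, hyL⟩ := hq.regular U hU {y} isCompact_singleton (singleton_subset_iff.2 hy)
  exact hq.map_mono_of_isImage_diff hL.isClosed.isImage hV.isImage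
    (hV.sdiff hL.isClosed).isImage (hLU.trans hUV) (singleton_subset_iff.1 hyL)

lemma map_mono (hq : IsImageTransformation q) {A B : Set X} (hA : IsImage A) (hB : IsImage B)
    (hAB : A ⊆ B) : q A ⊆ q B := by
  rcases hA with hA | hA <;> rcases hB with hB | hB
  · exact hq.map_mono_of_isOpen hA hB hAB
  · simpa [hq.map_compl hB.isImage, hq.map_compl hA.isImage] using
      hq.map_mono_of_isImage_diff hB.isOpen_compl.isImage hA.isClosed_compl.isImage
        (hA.isClosed_compl.sdiff hB.isOpen_compl).isImage (compl_subset_compl.2 hAB)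
  · exact hq.map_mono_of_isImage_diff hA.isImage hB.isImage (hB.sdiff hA).isImage hAB
  · simpa [hq.map_compl hB.isImage, hq.map_compl hA.isImage] using
      hq.map_mono_of_isOpen hB.isOpen_compl hA.isOpen_compl (compl_subset_compl.2 hAB)

lemma disjoint_map (hq : IsImageTransformation q) {A B : Set X} (hA : IsImage A)
    (hB : IsImage B) (hAB : Disjoint A B) : Disjoint (q A) (q B) := by
  rw [← subset_compl_iff_disjoint_right, ← hq.map_compl hB]
  exact hq.map_mono hA hB.compl (subset_compl_iff_disjoint_right.2 hAB)

lemma comp_preimage (hq : IsImageTransformation q) {Z : Type*} [TopologicalSpace Z] [T2Space Z]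
    {f : X → Z} (hf : Continuous f) : IsImageTransformation fun A : Set Z => q (f ⁻¹' A) where
  image A hA := hq.image _ (hA.preimage hf)
  top := hq.top
  openMap U hU := hq.openMap _ (hU.preimage hf)
  additive A B hA hB hAB hd :=
    hq.additive _ _ (hA.preimage hf) (hB.preimage hf) (hAB.preimage hf) (hd.preimage f)
  regular U hU K hK hKU := by
    obtain ⟨L, hL, hLU, hKL⟩ := hq.regular _ (hU.preimage hf) K hK hKU
    refine ⟨f '' L, hL.image hf, image_subset_iff.2 hLU, hKL.trans ?_⟩
    exact hq.map_mono hL.isClosed.isImage ((hL.image hf).isClosed.preimage hf).isImage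
      (subset_preimage_image f L)

end

section

variable {Y : Type*} [TopologicalSpace Y] {p : Set ℝ → Set Y}

lemma exists_forall_mem_map_Ioo (hp : IsImageTransformation p) (y : Y) :
    ∃ r : ℝ, ∀ s t, s < r → r < t → y ∈ p (Ioo s t) := by
  obtain ⟨L, hL, -, hyL⟩ := hp.regular univ isOpen_univ {y} isCompact_singleton (by simp [hp.top])
  rw [singleton_subset_iff] at hyL
  set T := {t : ℝ | y ∈ p (Ici t)}
  have hT : T.Nonempty := by
    obtain ⟨m, hm⟩ := hL.bddBelow
    exact ⟨m, hp.map_mono hL.isClosed.isImage isClosed_Ici.isImage (fun x hx => hm hx) hyL⟩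
  have hTbdd : BddAbove T := by
    obtain ⟨M, hM⟩ := hL.bddAbove
    refine ⟨M, fun t ht => not_lt.1 fun hMt => ?_⟩
    have hd : Disjoint L (Ici t) :=
      disjoint_left.2 fun x hx hxt => (hM hx).not_gt (hMt.trans_le hxt)
    exact disjoint_left.1 (hp.disjoint_map hL.isClosed.isImage isClosed_Ici.isImage hd) hyL ht
  refine ⟨sSup T, fun s t hs ht => ?_⟩
  have hnot_Ici : y ∉ p (Ici t) := fun hy => (le_csSup hTbdd hy).not_gt ht
  have hnot_Iic : y ∉ p (Iic s) := by
    obtain ⟨u, hu, hsu⟩ := exists_lt_of_lt_csSup hT hs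
    have hd : Disjoint (Iic s) (Ici u) :=
      disjoint_left.2 fun x hxs hxu => hsu.not_ge ((mem_Ici.1 hxu).trans hxs)
    exact fun hy => disjoint_left.1
      (hp.disjoint_map isClosed_Iic.isImage isClosed_Ici.isImage hd) hy hu
  have hsplit : (Ioo s t)ᶜ = Iic s ∪ Ici t := by
    ext x; simp only [mem_compl_iff, mem_Ioo, not_and_or, not_lt, mem_union, mem_Iic, mem_Ici]
  have hadd := hp.additive (Iic s) (Ici t) isClosed_Iic.isImage isClosed_Ici.isImage
    (hsplit ▸ isOpen_Ioo.isImage.compl)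
    (disjoint_left.2 fun x hxs hxt => (hs.trans ht).not_ge ((mem_Ici.1 hxt).trans hxs))
  have hy : y ∉ p (Ioo s t)ᶜ := by
    rw [hsplit, hadd.1]
    exact fun h => h.elim hnot_Iic hnot_Ici
  simpa [hp.map_compl isOpen_Ioo.isImage] using hy

lemma mem_map_iff_of_forall_mem_map_Ioo (hp : IsImageTransformation p) {y : Y} {r : ℝ}
    (hr : ∀ s t, s < r → r < t → y ∈ p (Ioo s t)) {A : Set ℝ} (hA : IsImage A) :
    y ∈ p A ↔ r ∈ A := by
  have hball : ∀ ε > 0, y ∈ p (Metric.ball r ε) := fun ε hε => by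
    rw [Real.ball_eq_Ioo]; exact hr _ _ (by linarith) (by linarith)
  have hopen : ∀ U : Set ℝ, IsOpen U → (y ∈ p U ↔ r ∈ U) := by
    intro U hU
    constructor
    · intro hy
      obtain ⟨L, hL, hLU, hyL⟩ := hp.regular U hU {y} isCompact_singleton
        (singleton_subset_iff.2 hy)
      refine hLU (by_contra fun hrL => ?_)
      obtain ⟨ε, hε, hεL⟩ := Metric.isOpen_iff.1 hL.isClosed.isOpen_compl r hrL
      have hd : Disjoint (Metric.ball r ε) L := subset_compl_iff_disjoint_right.1 hεL
      exact disjoint_left.1 (hp.disjoint_map Metric.isOpen_ball.isImage hL.isClosed.isImage hd)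
        (hball ε hε) (singleton_subset_iff.1 hyL)
    · intro hrU
      obtain ⟨ε, hε, hεU⟩ := Metric.isOpen_iff.1 hU r hrU
      exact hp.map_mono Metric.isOpen_ball.isImage hU.isImage hεU (hball ε hε)
  rcases hA with hA | hA
  · exact hopen A hA
  · simpa [hp.map_compl hA.isImage, not_iff_not] using hopen _ hA.isOpen_compl

lemma exists_forall_mem_map_iff (hp : IsImageTransformation p) (y : Y) :
    ∃ r : ℝ, ∀ A : Set ℝ, IsImage A → (y ∈ p A ↔ r ∈ A) := by
  obtain ⟨r, hr⟩ := hp.exists_forall_mem_map_Ioo y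
  exact ⟨r, fun A hA => hp.mem_map_iff_of_forall_mem_map_Ioo hr hA⟩

end

end IsImageTransformation

lemma qint_eq_integral {X : Type*} [TopologicalSpace X] {μ : Set X → ℝ} {a : X →ᵇ ℝ}
    (ν : Measure ℝ) [IsProbabilityMeasure ν]
    (hν : ∀ A : Set ℝ, IsImage A → ν A = ENNReal.ofReal (μ (a ⁻¹' A))) :
    qint μ a = ∫ t, t ∂ν := by
  have hex : ∃ ν : Measure ℝ, IsProbabilityMeasure ν ∧
      ∀ A : Set ℝ, IsImage A → ν A = ENNReal.ofReal (μ (a ⁻¹' A)) := ⟨ν, inferInstance, hν⟩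
  obtain ⟨_, hchoose⟩ := hex.choose_spec
  have heq : hex.choose = ν := Measure.ext_of_Iic _ _ fun t =>
    (hchoose _ isClosed_Iic.isImage).trans (hν _ isClosed_Iic.isImage).symm
  rw [qint, dif_pos hex, heq]

lemma qmap_eq_of_forall_mem_iff {X Y : Type*} [TopologicalSpace X] [TopologicalSpace Y]
    {q : Set X → Set Y} {a : X →ᵇ ℝ} {y : Y} {r : ℝ}
    (hr : ∀ A : Set ℝ, IsImage A → (y ∈ q (a ⁻¹' A) ↔ r ∈ A)) : qmap q a y = r := by
  rw [qmap, qint_eq_integral (Measure.dirac r) fun A hA => ?_, integral_dirac]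
  rw [Measure.dirac_apply' r hA.measurableSet]
  by_cases hrA : r ∈ A <;> simp [hrA, hr A hA]

lemma IsImageTransformation.mem_map_preimage_iff {X Y : Type*} [TopologicalSpace X] [T2Space X]
    [TopologicalSpace Y] {q : Set X → Set Y} (hq : IsImageTransformation q) (a : X →ᵇ ℝ) (y : Y)
    {A : Set ℝ} (hA : IsImage A) : y ∈ q (a ⁻¹' A) ↔ qmap q a y ∈ A := by
  obtain ⟨r, hr⟩ := (hq.comp_preimage a.continuous).exists_forall_mem_map_iff y
  rw [qmap_eq_of_forall_mem_iff hr]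
  exact hr A hA

theorem imageTransformation_integral_general {X Y : Type*} [TopologicalSpace X] [T2Space X]
    [TopologicalSpace Y]
    (q : Set X → Set Y) (hq : IsImageTransformation q) :
    (∀ a : X →ᵇ ℝ, Continuous (qmap q a) ∧ ∃ C : ℝ, ∀ y, |qmap q a y| ≤ C) ∧
    (∀ (a : X →ᵇ ℝ) (A : Set ℝ), IsImage A → q (a ⁻¹' A) = qmap q a ⁻¹' A) ∧
    ∀ (a : X →ᵇ ℝ) (φ : C(ℝ, ℝ)) (b : X →ᵇ ℝ), (∀ x, b x = φ (a x)) →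
      ∀ y, qmap q b y = φ (qmap q a y) := by
  have hpre : ∀ (a : X →ᵇ ℝ) (A : Set ℝ), IsImage A → q (a ⁻¹' A) = qmap q a ⁻¹' A :=
    fun a A hA => ext fun y => hq.mem_map_preimage_iff a y hA
  refine ⟨fun a => ⟨?_, ‖a‖, fun y => ?_⟩, hpre, fun a φ b hb y => ?_⟩
  · exact continuous_def.2 fun U hU =>
      hpre a U hU.isImage ▸ hq.openMap _ (hU.preimage a.continuous)
  · have hall : a ⁻¹' Icc (-‖a‖) ‖a‖ = univ :=
      eq_univ_of_forall fun x => abs_le.1 (by simpa using a.norm_coe_le_norm x)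
    refine abs_le.2 ((hq.mem_map_preimage_iff a y isClosed_Icc.isImage).1 ?_)
    simp [hall, hq.top]
  · have hb' : (b : X → ℝ) = φ ∘ a := funext hb
    refine qmap_eq_of_forall_mem_iff fun A hA => ?_
    rw [hb', preimage_comp]
    exact hq.mem_map_preimage_iff a y (hA.preimage φ.continuous)

/-- integration with respect to an image-transformation yields a bounded
continuous function with `q ∘ a⁻¹ = (q a)⁻¹` and `q(φ ∘ a) = φ ∘ q(a)`. -/
theorem imageTransformation_integral {X Y : Type*} [TopologicalSpace X] [T2Space X]
    [LocallyCompactSpace X] [TopologicalSpace Y] [T2Space Y]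
    (q : Set X → Set Y) (hq : IsImageTransformation q) :
    (∀ a : X →ᵇ ℝ, Continuous (qmap q a) ∧ ∃ C : ℝ, ∀ y, |qmap q a y| ≤ C) ∧
    (∀ (a : X →ᵇ ℝ) (A : Set ℝ), IsImage A → q (a ⁻¹' A) = qmap q a ⁻¹' A) ∧
    ∀ (a : X →ᵇ ℝ) (φ : C(ℝ, ℝ)) (b : X →ᵇ ℝ), (∀ x, b x = φ (a x)) →
      ∀ y, qmap q b y = φ (qmap q a y) :=
  imageTransformation_integral_general q hq
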